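/- For every nonzero square λ ∈ GF(q), the group G acts transitively on the set of points of the hyperbolic quadric Q_λ not on the conic C; this set has exactly q² + q points, and the stabilizer in G of any of its points has order q − 1. -/

import Mathlib

/-!
Common setting: `PG(3,q)` as the lattice of subspaces of `V = GF(q)⁴`;
the pencil of quadrics `Q_λ : x₁x₃ - x₂² + λx₄² = 0`, the plane `π : x₄ = 0`,
the conic `C = Q_λ ∩ π`, and the group `G ≤ PGL(4,q)` induced by the matrices
`M(a,b,c,d)`.
-/

/-- The quadratic form `F_λ(x) = x₁x₃ - x₂² + λx₄²` on `V = F⁴`. -/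
def Fq (F : Type) [Field F] (lam : F) (v : Fin 4 → F) : F :=
  v 0 * v 2 - v 1 ^ 2 + lam * v 3 ^ 2

/-- The matrix `M(a,b,c,d)`. -/
def Mmat (F : Type) [Field F] (a b c d : F) : Matrix (Fin 4) (Fin 4) F :=
  !![a^2, 2*a*c, c^2, 0;
     a*b, a*d + b*c, c*d, 0;
     b^2, 2*b*d, d^2, 0;
     0,   0,       0,   a*d - b*c]

/-- A point of `PG(3,q)`: a 1-dimensional subspace of `F⁴`. -/
def isPoint (F : Type) [Field F] (P : Submodule F (Fin 4 → F)) : Prop :=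
  Module.finrank F P = 1

/-- A line of `PG(3,q)`: a 2-dimensional subspace of `F⁴`. -/
def isLine (F : Type) [Field F] (l : Submodule F (Fin 4 → F)) : Prop :=
  Module.finrank F l = 2

/-- A plane of `PG(3,q)`: a 3-dimensional subspace of `F⁴`. -/
def isPlane (F : Type) [Field F] (s : Submodule F (Fin 4 → F)) : Prop :=
  Module.finrank F s = 3

/-- The quadric `Q_λ`, as the set of points on which `F_λ` vanishes. -/
def quadric (F : Type) [Field F] (lam : F) : Set (Submodule F (Fin 4 → F)) :=
  {P | isPoint F P ∧ ∀ v ∈ P, Fq F lam v = 0}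

/-- The plane `π : x₄ = 0`. -/
def planePi (F : Type) [Field F] : Submodule F (Fin 4 → F) where
  carrier := {v | v 3 = 0}
  add_mem' := by
    intro a b ha hb
    simp only [Set.mem_setOf_eq, Pi.add_apply] at *
    rw [ha, hb, add_zero]
  zero_mem' := by simp
  smul_mem' := by
    intro c a ha
    simp only [Set.mem_setOf_eq, Pi.smul_apply, smul_eq_mul] at *
    rw [ha, mul_zero]

/-- The point `U₄ = ⟨(0,0,0,1)⟩`. -/
def pointU4 (F : Type) [Field F] : Submodule F (Fin 4 → F) :=
  Submodule.span F {(Pi.single 3 1 : Fin 4 → F)}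

/-- The conic `C = Q_λ ∩ π` (independent of `λ`). -/
def conicC (F : Type) [Field F] : Set (Submodule F (Fin 4 → F)) :=
  {P | P ∈ quadric F 0 ∧ P ≤ planePi F}

/-- The set of points of the quadric `Q_λ` lying on a subspace `l`. -/
def qpts (F : Type) [Field F] (lam : F) (l : Submodule F (Fin 4 → F)) :
    Set (Submodule F (Fin 4 → F)) :=
  {P | P ∈ quadric F lam ∧ P ≤ l}

/-- A line is tangent to `Q_λ` if it contains exactly one of its points. -/
def tangentTo (F : Type) [Field F] (l : Submodule F (Fin 4 → F)) (lam : F) : Prop :=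
  (qpts F lam l).ncard = 1

/-- A line is secant to `Q_λ` if it contains exactly two of its points. -/
def secantTo (F : Type) [Field F] (l : Submodule F (Fin 4 → F)) (lam : F) : Prop :=
  (qpts F lam l).ncard = 2

/-- A line is external to `Q_λ` if it contains none of its points. -/
def externalTo (F : Type) [Field F] (l : Submodule F (Fin 4 → F)) (lam : F) : Prop :=
  (qpts F lam l).ncard = 0

/-- `L₁`: lines of `π` tangent to `C`. -/
def lineL1 (F : Type) [Field F] : Set (Submodule F (Fin 4 → F)) :=
  {l | isLine F l ∧ l ≤ planePi F ∧ ({P | P ∈ conicC F ∧ P ≤ l}).ncard = 1}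

/-- `L₂`: lines of `π` external to `C`. -/
def lineL2 (F : Type) [Field F] : Set (Submodule F (Fin 4 → F)) :=
  {l | isLine F l ∧ l ≤ planePi F ∧ ({P | P ∈ conicC F ∧ P ≤ l}).ncard = 0}

/-- `L₃`: lines of `π` secant to `C`. -/
def lineL3 (F : Type) [Field F] : Set (Submodule F (Fin 4 → F)) :=
  {l | isLine F l ∧ l ≤ planePi F ∧ ({P | P ∈ conicC F ∧ P ≤ l}).ncard = 2}

/-- `E`: the external points of `C` in `π` (on exactly two tangent lines of `C`). -/
def setE (F : Type) [Field F] : Set (Submodule F (Fin 4 → F)) :=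
  {P | isPoint F P ∧ P ≤ planePi F ∧ P ∉ conicC F ∧
    ({m | m ∈ lineL1 F ∧ P ≤ m}).ncard = 2}

/-- `I`: the internal points of `C` in `π` (on no tangent line of `C`). -/
def setI (F : Type) [Field F] : Set (Submodule F (Fin 4 → F)) :=
  {P | isPoint F P ∧ P ≤ planePi F ∧ P ∉ conicC F ∧
    ({m | m ∈ lineL1 F ∧ P ≤ m}).ncard = 0}

/-- `L₁'`: the lines through `U₄` contained in the cone `Q₀`. -/
def lineL1' (F : Type) [Field F] : Set (Submodule F (Fin 4 → F)) :=
  {l | isLine F l ∧ pointU4 F ≤ l ∧ ∀ v ∈ l, Fq F 0 v = 0}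

/-- `L₂'`: the lines through `U₄` meeting `π` in a point of `I`. -/
def lineL2' (F : Type) [Field F] : Set (Submodule F (Fin 4 → F)) :=
  {l | isLine F l ∧ pointU4 F ≤ l ∧ (l ⊓ planePi F) ∈ setI F}

/-- `L₃'`: the lines through `U₄` meeting `π` in a point of `E`. -/
def lineL3' (F : Type) [Field F] : Set (Submodule F (Fin 4 → F)) :=
  {l | isLine F l ∧ pointU4 F ≤ l ∧ (l ⊓ planePi F) ∈ setE F}

/-- `L₄`: the lines not through `U₄`, tangent to the cone `Q₀`, meeting `π` in a
point of `E`. -/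
def lineL4 (F : Type) [Field F] : Set (Submodule F (Fin 4 → F)) :=
  {l | isLine F l ∧ ¬ pointU4 F ≤ l ∧ tangentTo F l 0 ∧ (l ⊓ planePi F) ∈ setE F}

/-- `L₄'`: the lines meeting `π` in exactly one point, lying on `C`, and secant to
every quadric `Q_λ`. -/
def lineL4' (F : Type) [Field F] : Set (Submodule F (Fin 4 → F)) :=
  {l | isLine F l ∧ (l ⊓ planePi F) ∈ conicC F ∧ ∀ lam : F, secantTo F l lam}

/-- The collineations of `PG(3,q)` induced by the matrices `M(a,b,c,d)`,
`ad - bc ≠ 0`, acting on subspaces. -/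
def Gcoll (F : Type) [Field F] : Set (Equiv.Perm (Submodule F (Fin 4 → F))) :=
  {σ | ∃ a b c d : F, a * d - b * c ≠ 0 ∧
    ∃ e : (Fin 4 → F) ≃ₗ[F] (Fin 4 → F),
      (∀ v, e v = (Mmat F a b c d).mulVec v) ∧
      ∀ W : Submodule F (Fin 4 → F), σ W = W.map e.toLinearMap}

/-- The group `G ≃ PGL(2,q)`, as a group of collineations of `PG(3,q)`. -/
def G (F : Type) [Field F] : Subgroup (Equiv.Perm (Submodule F (Fin 4 → F))) :=
  Subgroup.closure (Gcoll F)

/-- `A = L₁' ∪ L₂' ∪ L₃ ∪ L₄'`. -/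
def setA (F : Type) [Field F] : Set (Submodule F (Fin 4 → F)) :=
  lineL1' F ∪ lineL2' F ∪ lineL3 F ∪ lineL4' F

/-- `B = L₁ ∪ L₂ ∪ L₃' ∪ L₄`. -/
def setB (F : Type) [Field F] : Set (Submodule F (Fin 4 → F)) :=
  lineL1 F ∪ lineL2 F ∪ lineL3' F ∪ lineL4 F

/-- `S_ℓ`: the lines of `S` meeting the line `ℓ` (in at least a point). -/
def linesMeeting (F : Type) [Field F] (S : Set (Submodule F (Fin 4 → F)))
    (l : Submodule F (Fin 4 → F)) : Set (Submodule F (Fin 4 → F)) :=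
  {r | r ∈ S ∧ r ⊓ l ≠ ⊥}

/-- A spread of `PG(3,q)`: `q² + 1` pairwise disjoint lines. -/
def isSpread (F : Type) [Field F] (q : ℕ) (S : Set (Submodule F (Fin 4 → F))) : Prop :=
  (∀ l ∈ S, isLine F l) ∧ S.ncard = q ^ 2 + 1 ∧
    ∀ l ∈ S, ∀ l' ∈ S, l ≠ l' → l ⊓ l' = ⊥

/-- A Cameron–Liebler line class with parameter `x`: a set of lines meeting every
spread in exactly `x` lines. -/
def isCameronLiebler (F : Type) [Field F] (q x : ℕ)
    (L : Set (Submodule F (Fin 4 → F))) : Prop :=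
  (∀ l ∈ L, isLine F l) ∧ ∀ S, isSpread F q S → (L ∩ S).ncard = x

/-- `O_n`: the points off `Q_λ` at which `F_λ` evaluates to a nonsquare. -/
def setOn (F : Type) [Field F] (lam : F) : Set (Submodule F (Fin 4 → F)) :=
  {P | isPoint F P ∧ ∀ v ∈ P, v ≠ 0 → ¬ IsSquare (Fq F lam v)}

/-- `O_s`: the points off `Q_λ` at which `F_λ` evaluates to a nonzero square. -/
def setOs (F : Type) [Field F] (lam : F) : Set (Submodule F (Fin 4 → F)) :=
  {P | isPoint F P ∧ ∀ v ∈ P, v ≠ 0 → Fq F lam v ≠ 0 ∧ IsSquare (Fq F lam v)}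

/-- `T`: the tangent lines to `Q_λ` all of whose points off `Q_λ` lie in `O_n`. -/
def setT (F : Type) [Field F] (lam : F) : Set (Submodule F (Fin 4 → F)) :=
  {l | isLine F l ∧ tangentTo F l lam ∧
    ∀ P, isPoint F P → P ≤ l → P ∉ quadric F lam → P ∈ setOn F lam}

/-- `S`: the secant lines to `Q_λ`. -/
def setS (F : Type) [Field F] (lam : F) : Set (Submodule F (Fin 4 → F)) :=
  {l | isLine F l ∧ secantTo F l lam}

/-- The symmetric bilinear form obtained by polarizing `F_λ`. -/
def polarFq (F : Type) [Field F] (lam : F) (u v : Fin 4 → F) : F :=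
  Fq F lam (u + v) - Fq F lam u - Fq F lam v

theorem polarFq_eq (F : Type) [Field F] (lam : F) (u v : Fin 4 → F) :
    polarFq F lam u v =
      u 0 * v 2 + u 2 * v 0 - 2 * (u 1 * v 1) + lam * (2 * (u 3 * v 3)) := by
  simp only [polarFq, Fq, Pi.add_apply]
  ring

/-- `W^{⊥_λ}`: the orthogonal complement of a subspace `W` with respect to the
symmetric bilinear form obtained by polarizing `F_λ`. -/
def perpLam (F : Type) [Field F] (lam : F) (W : Submodule F (Fin 4 → F)) :
    Submodule F (Fin 4 → F) where
  carrier := {v | ∀ u ∈ W, polarFq F lam u v = 0}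
  add_mem' := by
    intro x y hx hy u hu
    have h1 := hx u hu
    have h2 := hy u hu
    rw [polarFq_eq] at h1 h2 ⊢
    simp only [Pi.add_apply]
    linear_combination h1 + h2
  zero_mem' := by
    intro u hu
    rw [polarFq_eq]
    simp
  smul_mem' := by
    intro c x hx u hu
    have h1 := hx u hu
    rw [polarFq_eq] at h1 ⊢
    simp only [Pi.smul_apply, smul_eq_mul]
    linear_combination c * h1

/-!
`A ↦ M(A)`, with `A = !![a, c; b, d]`, is multiplicative (it is the symmetric square of `A`,
extended by `det A`), so `G` is the image of `GL(2,q)`. Write `λ = μ²`. A point of `Q_λ` off `π`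
is `⟨(x₁, x₂, x₃, 1)⟩` with `x₁x₃ = (x₂ + μ)(x₂ - μ)`, so `!![x₁, x₂ + μ; x₂ - μ, x₃]` is singular
and factors as an outer product `(a, b)ᵀ(c, d)`; then `M(a,b,c,d)` maps `⟨(0, μ, 0, 1)⟩` to the
point. Counting solutions with `x₁ ≠ 0` (then `x₃` is determined) and `x₁ = 0` (then `x₂ = ±μ`)
gives `q(q - 1) + 2q` points. A matrix `M(A)` fixes `⟨(0, μ, 0, 1)⟩` iff `A` is diagonal, and
modulo the scalars, which act trivially, these are the `diag(r, 1)`, `r ∈ GF(q)ˣ`.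
-/

open Matrix Pointwise

section Collineations

variable {F : Type} [Field F]

variable (F) in
def mmatHom : Matrix (Fin 2) (Fin 2) F →* Matrix (Fin 4) (Fin 4) F where
  toFun A := Mmat F (A 0 0) (A 1 0) (A 0 1) (A 1 1)
  map_one' := by
    ext i j
    fin_cases i <;> fin_cases j <;> simp [Mmat]
  map_mul' A B := by
    ext i j
    fin_cases i <;> fin_cases j <;>
      simp [Mmat, mul_apply, Fin.sum_univ_two, Fin.sum_univ_four] <;> ring

theorem mmatHom_of (a b c d : F) : mmatHom F !![a, c; b, d] = Mmat F a b c d := rfl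

variable (F) in
noncomputable def collineation : GL (Fin 2) F →* Equiv.Perm (Submodule F (Fin 4 → F)) :=
  (MulAction.toPermHom ((Fin 4 → F) ≃ₗ[F] (Fin 4 → F)) (Submodule F (Fin 4 → F))).comp <|
    (LinearMap.GeneralLinearGroup.generalLinearEquiv F (Fin 4 → F)).toMonoidHom.comp <|
      GeneralLinearGroup.toLin.toMonoidHom.comp (Units.map (mmatHom F))

theorem collineation_apply (A : GL (Fin 2) F) (W : Submodule F (Fin 4 → F)) :
    collineation F A W = W.map (mmatHom F A).mulVecLin :=
  rfl

theorem collineation_span (A : GL (Fin 2) F) (v : Fin 4 → F) :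
    collineation F A (F ∙ v) = F ∙ (mmatHom F A *ᵥ v) := by
  rw [collineation_apply, Submodule.map_span, Set.image_singleton, mulVecLin_apply]

theorem collineation_scalar (t : Fˣ) :
    collineation F (GeneralLinearGroup.scalar (Fin 2) t) = 1 := by
  have hM : mmatHom F (GeneralLinearGroup.scalar (Fin 2) t) = ((t : F) ^ 2) • 1 := by
    ext i j
    fin_cases i <;> fin_cases j <;> simp [mmatHom, Mmat] <;> ring
  have hL : (mmatHom F (GeneralLinearGroup.scalar (Fin 2) t)).mulVecLin =
      ((t : F) ^ 2) • LinearMap.id :=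
    LinearMap.ext fun v => by
      rw [mulVecLin_apply, hM, smul_mulVec, one_mulVec, LinearMap.smul_apply, LinearMap.id_apply]
  ext W : 1
  rw [collineation_apply, hL, Submodule.map_smul _ _ _ (pow_ne_zero 2 t.ne_zero),
    Submodule.map_id, Equiv.Perm.one_apply]

theorem Gcoll_eq_range : Gcoll F = Set.range (collineation F) := by
  ext σ
  constructor
  · rintro ⟨a, b, c, d, hdet, e, he, hσ⟩
    refine ⟨GeneralLinearGroup.mkOfDetNeZero !![a, c; b, d] ?_, Equiv.ext fun W => ?_⟩
    · rwa [det_fin_two_of, mul_comm c]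
    · rw [hσ, collineation_apply]
      exact congrArg W.map (LinearMap.ext fun v => (he v).symm)
  · rintro ⟨A, rfl⟩
    refine ⟨A 0 0, A 1 0, A 0 1, A 1 1, ?_, LinearMap.GeneralLinearGroup.generalLinearEquiv F _
      (GeneralLinearGroup.toLin (Units.map (mmatHom F) A)), fun _ => rfl, fun _ => rfl⟩
    have hdet := (GeneralLinearGroup.det A).ne_zero
    rwa [GeneralLinearGroup.val_det_apply, det_fin_two, mul_comm (A 0 1)] at hdet

theorem G_eq_range : G F = (collineation F).range := by
  rw [G, Gcoll_eq_range, ← MonoidHom.coe_range, Subgroup.closure_eq]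

end Collineations

section AffinePart

variable {F : Type} [Field F]

theorem Fq_smul (lam t : F) (v : Fin 4 → F) : Fq F lam (t • v) = t ^ 2 * Fq F lam v := by
  simp only [Fq, Pi.smul_apply, smul_eq_mul]
  ring

theorem exists_eq_span_of_isPoint {P : Submodule F (Fin 4 → F)} (hP : isPoint F P) :
    ∃ v ≠ 0, P = F ∙ v := by
  have hne : P ≠ ⊥ := by
    rintro rfl
    simp [isPoint] at hP
  obtain ⟨v, hv, hv0⟩ := Submodule.exists_mem_ne_zero_of_ne_bot hne
  exact ⟨v, hv0, eq_span_singleton_of_mem_of_finrank_eq_one hP hv hv0⟩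

theorem span_mem_quadric_iff {lam : F} {v : Fin 4 → F} (hv : v ≠ 0) :
    F ∙ v ∈ quadric F lam ↔ Fq F lam v = 0 := by
  refine ⟨fun h => h.2 v (Submodule.mem_span_singleton_self v), fun h => ?_⟩
  refine ⟨finrank_span_singleton hv, fun w hw => ?_⟩
  obtain ⟨t, rfl⟩ := Submodule.mem_span_singleton.1 hw
  rw [Fq_smul, h, mul_zero]

theorem span_mem_conicC_of_mem_quadric {lam : F} {v : Fin 4 → F} (hv : v ≠ 0)
    (hQ : F ∙ v ∈ quadric F lam) (h3 : v 3 = 0) : F ∙ v ∈ conicC F := by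
  refine ⟨(span_mem_quadric_iff hv).2 ?_, (Submodule.span_singleton_le_iff_mem _ _).2 h3⟩
  have hFq := (span_mem_quadric_iff hv).1 hQ
  simpa [Fq, h3] using hFq

def affinePoint (x : F × F × F) : Submodule F (Fin 4 → F) :=
  F ∙ ![x.1, x.2.1, x.2.2, 1]

def affineQuadric (lam : F) : Set (F × F × F) :=
  {x | x.1 * x.2.2 - x.2.1 ^ 2 + lam = 0}

theorem affinePoint_injective : Function.Injective (affinePoint (F := F)) := by
  rintro ⟨x₁, x₂, x₃⟩ ⟨y₁, y₂, y₃⟩ h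
  obtain ⟨t, ht⟩ := Submodule.span_singleton_eq_span_singleton.1 h
  have ht1 : (t : F) = 1 := by simpa [Units.smul_def] using congrFun ht 3
  have h0 := congrFun ht 0
  have h1 := congrFun ht 1
  have h2 := congrFun ht 2
  simp [Units.smul_def, ht1] at h0 h1 h2
  rw [h0, h1, h2]

theorem quadric_sdiff_conicC (lam : F) :
    quadric F lam \ conicC F = affinePoint '' affineQuadric lam := by
  ext P
  constructor
  · rintro ⟨hPQ, hPC⟩
    obtain ⟨v, hv0, rfl⟩ := exists_eq_span_of_isPoint hPQ.1
    have hv3 : v 3 ≠ 0 := fun h3 => hPC (span_mem_conicC_of_mem_quadric hv0 hPQ h3)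
    have hv : (v 3)⁻¹ • v = ![(v 3)⁻¹ * v 0, (v 3)⁻¹ * v 1, (v 3)⁻¹ * v 2, 1] := by
      ext i
      fin_cases i <;> simp [inv_mul_cancel₀ hv3]
    refine ⟨((v 3)⁻¹ * v 0, (v 3)⁻¹ * v 1, (v 3)⁻¹ * v 2), ?_, ?_⟩
    · have hFq := congrArg (fun v => Fq F lam v) hv
      simp only [Fq_smul, (span_mem_quadric_iff hv0).1 hPQ, mul_zero] at hFq
      simpa [affineQuadric, Fq] using hFq.symm
    · rw [affinePoint, ← hv, Submodule.span_singleton_smul_eq (IsUnit.mk0 _ (inv_ne_zero hv3))]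
  · rintro ⟨x, hx, rfl⟩
    have hv0 : (![x.1, x.2.1, x.2.2, 1] : Fin 4 → F) ≠ 0 := fun h => by simpa using congrFun h 3
    refine ⟨(span_mem_quadric_iff hv0).2 ?_, fun hC => ?_⟩
    · simpa [Fq, affineQuadric] using hx
    · simpa [planePi] using hC.2 (Submodule.mem_span_singleton_self _)

end AffinePart

section Counting

variable {F : Type} [Field F]

theorem card_affineQuadric_fiber_of_ne_zero (lam : F) {a : F} (ha : a ≠ 0) :
    Nat.card {p : F × F // a * p.2 - p.1 ^ 2 + lam = 0} = Nat.card F :=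
  Nat.card_congr
    { toFun := fun p => p.1.1
      invFun := fun y => ⟨(y, (y ^ 2 - lam) / a), by field_simp; ring⟩
      left_inv := fun ⟨⟨y, z⟩, h⟩ => by
        ext
        · rfl
        · exact (eq_div_of_mul_eq ha (by linear_combination h)).symm
      right_inv := fun _ => rfl }

theorem card_affineQuadric_fiber_zero {μ : F} (hμ : μ ≠ 0) (h2 : (2 : F) ≠ 0) :
    Nat.card {p : F × F // 0 * p.2 - p.1 ^ 2 + μ ^ 2 = 0} = 2 * Nat.card F := by
  have hroots : ∀ p : F × F, 0 * p.2 - p.1 ^ 2 + μ ^ 2 = 0 ↔ p.1 ∈ ({μ, -μ} : Set F) := by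
    intro p
    rw [Set.mem_insert_iff, Set.mem_singleton_iff, ← sq_eq_sq_iff_eq_or_eq_neg]
    constructor <;> intro h <;> linear_combination -h
  have hne : μ ≠ -μ := fun h => hμ (by simpa [h2] using (by linear_combination h : 2 * μ = 0))
  rw [Nat.card_congr ((Equiv.subtypeEquivRight hroots).trans
      Equiv.prodSubtypeFstEquivSubtypeProd), Nat.card_prod, Nat.card_coe_set_eq,
    Set.ncard_pair hne]

theorem ncard_affineQuadric [Fintype F] {μ : F} (hμ : μ ≠ 0) (h2 : (2 : F) ≠ 0) :
    (affineQuadric (μ ^ 2)).ncard = Fintype.card F ^ 2 + Fintype.card F := by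
  classical
  rw [← Nat.card_coe_set_eq]
  refine (Nat.card_congr (Equiv.subtypeProdEquivSigmaSubtype
    fun (a : F) (p : F × F) => a * p.2 - p.1 ^ 2 + μ ^ 2 = 0)).trans ?_
  rw [Nat.card_sigma, Fintype.sum_eq_add_sum_compl 0, card_affineQuadric_fiber_zero hμ h2,
    Finset.sum_congr rfl fun a ha =>
      card_affineQuadric_fiber_of_ne_zero _ (by simpa using ha),
    Finset.sum_const, Finset.card_compl, Finset.card_singleton, smul_eq_mul,
    Nat.card_eq_fintype_card]
  obtain ⟨n, hn⟩ := Nat.exists_eq_add_one_of_ne_zero (Fintype.card_ne_zero (α := F))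
  rw [hn, Nat.add_sub_cancel]
  ring

end Counting

section Orbit

variable {F : Type} [Field F]

theorem exists_mul_eq_of_mul_eq_mul {p q r s : F} (h : p * s = q * r) :
    ∃ a b c d : F, a * c = p ∧ a * d = q ∧ b * c = r ∧ b * d = s := by
  by_cases hp : p = 0
  · subst hp
    by_cases hq : q = 0
    · exact ⟨0, 1, r, s, by simp [hq]⟩
    · have hr : r = 0 := by simpa [hq] using h.symm
      exact ⟨1, s / q, 0, q, by simp [hr, div_mul_cancel₀ s hq]⟩
  · refine ⟨1, r / p, p, q, by simp, by simp, div_mul_cancel₀ r hp, ?_⟩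
    rw [div_mul_eq_mul_div, div_eq_iff hp, mul_comm r, ← h, mul_comm]

def basePoint (μ : F) : Submodule F (Fin 4 → F) :=
  F ∙ ![0, μ, 0, 1]

theorem Mmat_mulVec_basePoint (a b c d μ : F) :
    Mmat F a b c d *ᵥ ![0, μ, 0, 1] =
      ![2 * a * c * μ, (a * d + b * c) * μ, 2 * b * d * μ, a * d - b * c] := by
  ext i
  fin_cases i <;> simp [Mmat, mulVec, dotProduct, Fin.sum_univ_four]

theorem exists_collineation_basePoint_eq {μ : F} (hμ : μ ≠ 0) (h2 : (2 : F) ≠ 0)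
    {x : F × F × F} (hx : x ∈ affineQuadric (μ ^ 2)) :
    ∃ A : GL (Fin 2) F, collineation F A (basePoint μ) = affinePoint x := by
  obtain ⟨x₁, x₂, x₃⟩ := x
  have hx : x₁ * x₃ - x₂ ^ 2 + μ ^ 2 = 0 := hx
  obtain ⟨a, b, c, d, hac, had, hbc, hbd⟩ :=
    exists_mul_eq_of_mul_eq_mul (p := x₁) (q := x₂ + μ) (r := x₂ - μ) (s := x₃)
      (by linear_combination hx)
  have hdet : a * d - b * c = 2 * μ := by rw [had, hbc]; ring
  refine ⟨GeneralLinearGroup.mkOfDetNeZero !![a, c; b, d] ?_, ?_⟩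
  · rw [det_fin_two_of, mul_comm c, hdet]
    exact mul_ne_zero h2 hμ
  · have hv : Mmat F a b c d *ᵥ ![0, μ, 0, 1] = (2 * μ) • ![x₁, x₂, x₃, 1] := by
      rw [Mmat_mulVec_basePoint]
      ext i
      fin_cases i <;> simp
      · linear_combination 2 * μ * hac
      · linear_combination μ * had + μ * hbc
      · linear_combination 2 * μ * hbd
      · exact hdet
    rw [basePoint, collineation_span, GeneralLinearGroup.val_mkOfDetNeZero, mmatHom_of, hv,
      Submodule.span_singleton_smul_eq (IsUnit.mk0 _ (mul_ne_zero h2 hμ)), affinePoint]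

end Orbit

section Stabilizer

variable {F : Type} [Field F]

theorem span_Mmat_mulVec_basePoint_eq_iff {a b c d μ : F} (hμ : μ ≠ 0) (h2 : (2 : F) ≠ 0)
    (hdet : a * d - b * c ≠ 0) :
    F ∙ (Mmat F a b c d *ᵥ ![0, μ, 0, 1]) = basePoint μ ↔ c = 0 ∧ b = 0 := by
  rw [basePoint, eq_comm, Submodule.span_singleton_eq_span_singleton, Mmat_mulVec_basePoint]
  constructor
  · rintro ⟨z, hz⟩
    have e0 := congrFun hz 0
    have e1 := congrFun hz 1
    have e2 := congrFun hz 2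
    have e3 := congrFun hz 3
    simp [Units.smul_def, hμ, h2] at e0 e1 e2 e3
    have hbc : b * c = 0 := by
      simpa [h2] using (by linear_combination e3 - e1 : 2 * (b * c) = 0)
    have hc : c = 0 := e0.resolve_left fun ha => hdet (by rw [ha, hbc]; ring)
    exact ⟨hc, e2.resolve_right fun hd => hdet (by rw [hd, hc]; ring)⟩
  · rintro ⟨rfl, rfl⟩
    have had : a * d ≠ 0 := by simpa using hdet
    refine ⟨Units.mk0 _ had, ?_⟩
    ext i
    fin_cases i <;> simp [Units.smul_def]

theorem collineation_basePoint_eq_iff {μ : F} (hμ : μ ≠ 0) (h2 : (2 : F) ≠ 0)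
    (A : GL (Fin 2) F) :
    collineation F A (basePoint μ) = basePoint μ ↔ A 0 1 = 0 ∧ A 1 0 = 0 := by
  have hdet := (GeneralLinearGroup.det A).ne_zero
  rw [GeneralLinearGroup.val_det_apply, det_fin_two, mul_comm (A 0 1)] at hdet
  rw [basePoint, collineation_span]
  exact span_Mmat_mulVec_basePoint_eq_iff hμ h2 hdet

variable (F) in
def diagOne : Fˣ →* GL (Fin 2) F :=
  Units.map ((diagonalRingHom (Fin 2) F).toMonoidHom.comp (MonoidHom.mulSingle (fun _ => F) 0))

theorem val_diagOne (r : Fˣ) :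
    (diagOne F r : Matrix (Fin 2) (Fin 2) F) = diagonal (Pi.mulSingle 0 (r : F)) :=
  rfl

theorem mmatHom_diagOne (r : Fˣ) : mmatHom F (diagOne F r) = Mmat F r 0 0 1 := by
  simp [mmatHom, val_diagOne]

theorem collineation_diagOne_injective :
    Function.Injective ((collineation F).comp (diagOne F)) := by
  rw [injective_iff_map_eq_one]
  intro r hr
  have h := congrArg (fun σ => σ (F ∙ ![1, 1, 0, 0])) hr
  have hv : Mmat F r 0 0 1 *ᵥ ![1, 1, 0, 0] = ![(r : F) ^ 2, r, 0, 0] := by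
    ext i
    fin_cases i <;> simp [Mmat, mulVec, dotProduct, Fin.sum_univ_four]
  simp only [MonoidHom.comp_apply, collineation_span, mmatHom_diagOne, hv,
    Equiv.Perm.one_apply] at h
  obtain ⟨z, hz⟩ := Submodule.span_singleton_eq_span_singleton.1 h
  have e0 := congrFun hz 0
  have e1 := congrFun hz 1
  simp [Units.smul_def] at e0 e1
  ext
  rw [Units.val_one]
  linear_combination e0 - r * e1

theorem exists_collineation_diagOne_eq (A : GL (Fin 2) F) (h01 : A 0 1 = 0) (h10 : A 1 0 = 0) :
    ∃ r : Fˣ, collineation F (diagOne F r) = collineation F A := by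
  have hdet := (GeneralLinearGroup.det A).ne_zero
  rw [GeneralLinearGroup.val_det_apply, det_fin_two, h01, h10, mul_zero, sub_zero] at hdet
  set a := Units.mk0 _ (left_ne_zero_of_mul hdet)
  set d := Units.mk0 _ (right_ne_zero_of_mul hdet)
  have hA : A = GeneralLinearGroup.scalar (Fin 2) d * diagOne F (a / d) := by
    refine GeneralLinearGroup.ext fun i j => ?_
    simp only [Units.val_mul, GeneralLinearGroup.coe_scalar, val_diagOne]
    fin_cases i <;> fin_cases j <;>
      simp [a, d, h01, h10, mul_div_cancel₀ _ (right_ne_zero_of_mul hdet)]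
  refine ⟨a / d, ?_⟩
  rw [hA, map_mul, collineation_scalar, one_mul]

theorem card_stabilizer_basePoint {μ : F} (hμ : μ ≠ 0) (h2 : (2 : F) ≠ 0) :
    Nat.card (MulAction.stabilizer (G F) (basePoint μ)) = Nat.card F - 1 := by
  have hmem : ∀ r : Fˣ, collineation F (diagOne F r) ∈ G F := fun r => by
    rw [G_eq_range]
    exact ⟨_, rfl⟩
  have hfix : ∀ r : Fˣ, collineation F (diagOne F r) (basePoint μ) = basePoint μ := fun r =>
    (collineation_basePoint_eq_iff hμ h2 _).2 ⟨by simp [val_diagOne], by simp [val_diagOne]⟩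
  let f : Fˣ → MulAction.stabilizer (G F) (basePoint μ) := fun r => ⟨⟨_, hmem r⟩, hfix r⟩
  rw [← Nat.card_units F]
  refine (Nat.card_eq_of_bijective f
    ⟨fun r s h => collineation_diagOne_injective ?_, ?_⟩).symm
  · exact congrArg (·.1.1) h
  · rintro ⟨⟨σ, hσ⟩, hσfix⟩
    obtain ⟨A, rfl⟩ : σ ∈ (collineation F).range := by rwa [G_eq_range] at hσ
    obtain ⟨h01, h10⟩ := (collineation_basePoint_eq_iff hμ h2 A).1 hσfix
    obtain ⟨r, hr⟩ := exists_collineation_diagOne_eq A h01 h10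
    exact ⟨r, Subtype.ext (Subtype.ext hr)⟩

end Stabilizer

theorem two_ne_zero_of_odd_card {F : Type} [Field F] [Fintype F] (h : Odd (Fintype.card F)) :
    (2 : F) ≠ 0 :=
  Ring.two_ne_zero fun hF => by
    have := FiniteField.even_card_iff_char_two.1 hF
    rw [Nat.odd_iff] at h
    omega

theorem statement_2 {F : Type} [Field F] [Fintype F] (q : ℕ)
    (hq : Fintype.card F = q) (hodd : Odd q)
    (lam : F) (hlam0 : lam ≠ 0) (hlamsq : IsSquare lam) :
    (∀ P ∈ quadric F lam \ conicC F, ∀ P' ∈ quadric F lam \ conicC F,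
      ∃ g ∈ G F, g • P = P') ∧
    (quadric F lam \ conicC F).ncard = q ^ 2 + q ∧
    (∀ P ∈ quadric F lam \ conicC F,
      Nat.card (MulAction.stabilizer (G F) P) = q - 1) := by
  obtain ⟨μ, rfl⟩ := hlamsq
  have hμ : μ ≠ 0 := by
    rintro rfl
    exact hlam0 (mul_zero 0)
  have h2 : (2 : F) ≠ 0 := two_ne_zero_of_odd_card (hq ▸ hodd)
  rw [← sq]
  have horbit : ∀ P ∈ quadric F (μ ^ 2) \ conicC F, ∃ g ∈ G F, g • basePoint μ = P := by
    rw [quadric_sdiff_conicC]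
    rintro _ ⟨x, hx, rfl⟩
    obtain ⟨A, hA⟩ := exists_collineation_basePoint_eq hμ h2 hx
    exact ⟨collineation F A, G_eq_range (F := F) ▸ ⟨A, rfl⟩, hA⟩
  refine ⟨fun P hP P' hP' => ?_, ?_, fun P hP => ?_⟩
  · obtain ⟨g, hg, rfl⟩ := horbit P hP
    obtain ⟨g', hg', rfl⟩ := horbit P' hP'
    exact ⟨g' * g⁻¹, mul_mem hg' (inv_mem hg), by rw [mul_smul, inv_smul_smul]⟩
  · rw [quadric_sdiff_conicC, Set.ncard_image_of_injective _ affinePoint_injective,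
      ncard_affineQuadric hμ h2, hq]
  · obtain ⟨g, hg, rfl⟩ := horbit P hP
    rw [← Nat.card_congr (MulAction.stabilizerEquivStabilizer (g := (⟨g, hg⟩ : G F))
      (a := basePoint μ) (b := g • basePoint μ) rfl).toEquiv,
      card_stabilizer_basePoint hμ h2, Nat.card_eq_fintype_card, hq]
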